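/- arXiv:1506.08473 — 6 statements merged into one kernel-verified Lean document; each statement's English description precedes it below -/
import Mathlib

section
/- For the two-layer neural network label function f̃(x) := ⟨a_2, σ(A_1^T x + b_1)⟩ + b_2, with x having a smooth density satisfying regularity (vanishing boundary) conditions, the cross-moment between the label and the third-order score function has the CP decomposition E[ỹ · S_3(x)] = Σ_{j=1}^k λ_j · (A_1)_j ⊗ (A_1)_j ⊗ (A_1)_j, where λ_j = E[σ'''(z_j)] · a_2(j) with z = A_1^T x + b_1. -/
/-!
The label `f̃` is a constant plus a sum of ridge functions `x ↦ a₂(j) σ(⟪(A₁)_j, x⟫ + b₁(j))`, and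
the `n`-th derivative of a ridge function `φ ∘ ⟪w, ·⟫` is `φ⁽ⁿ⁾(⟪w, x⟫) w ⊗ ⋯ ⊗ w`. So
`∇⁽³⁾f̃(x) = Σⱼ a₂(j) σ'''(zⱼ) (A₁)ⱼ ⊗ (A₁)ⱼ ⊗ (A₁)ⱼ`, and taking expectations in the Stein
identity `E[ỹ S₃(x)] = E[∇⁽³⁾f̃(x)]` gives the CP decomposition.
-/

open MeasureTheory

section RidgeDerivatives

variable {E : Type*} [NormedAddCommGroup E]

theorem iteratedFDeriv_comp_clm_apply [NormedSpace ℝ E] {n : ℕ} {φ : ℝ → ℝ}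
    (hφ : ContDiff ℝ n φ) (L : E →L[ℝ] ℝ) (x : E) (v : Fin n → E) :
    iteratedFDeriv ℝ n (φ ∘ L) x v = iteratedDeriv n φ (L x) * ∏ i, L (v i) := by
  rw [L.iteratedFDeriv_comp_right hφ x le_rfl,
    ContinuousMultilinearMap.compContinuousLinearMap_apply,
    iteratedFDeriv_apply_eq_iteratedDeriv_mul_prod, smul_eq_mul, mul_comm]

variable [InnerProductSpace ℝ E]

theorem iteratedFDeriv_ridge_apply {n : ℕ} {σ : ℝ → ℝ} (hσ : ContDiff ℝ n σ)
    (w : E) (b : ℝ) (x : E) (v : Fin n → E) :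
    iteratedFDeriv ℝ n (fun y => σ (inner ℝ w y + b)) x v
      = iteratedDeriv n σ (inner ℝ w x + b) * ∏ i, inner ℝ w (v i) := by
  have hshift : ContDiff ℝ n (fun t => σ (t + b)) := hσ.comp (contDiff_id.add contDiff_const)
  have key := iteratedFDeriv_comp_clm_apply hshift (innerSL ℝ w) x v
  rw [iteratedDeriv_comp_add_const] at key
  exact key

theorem iteratedFDeriv_twoLayer_apply {ι : Type*} [Fintype ι] {n : ℕ} (hn : n ≠ 0)
    {σ : ℝ → ℝ} (hσ : ContDiff ℝ n σ) (w : ι → E) (a b : ι → ℝ) (c : ℝ)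
    (x : E) (v : Fin n → E) :
    iteratedFDeriv ℝ n (fun y => (∑ j, a j * σ (inner ℝ (w j) y + b j)) + c) x v
      = ∑ j, a j * (iteratedDeriv n σ (inner ℝ (w j) x + b j) * ∏ i, inner ℝ (w j) (v i)) := by
  have hridge : ∀ j, ContDiff ℝ n (fun y => σ (inner ℝ (w j) y + b j)) := fun j =>
    hσ.comp (((innerSL ℝ (w j)).contDiff).add contDiff_const)
  have hsum : ContDiff ℝ n (fun y => ∑ j, a j * σ (inner ℝ (w j) y + b j)) :=
    ContDiff.sum fun j _ => contDiff_const.mul (hridge j)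
  rw [fun_iteratedFDeriv_add_apply hsum.contDiffAt contDiff_const.contDiffAt,
    iteratedFDeriv_const_of_ne hn, Pi.zero_apply, add_zero,
    iteratedFDeriv_sum (fun j _ => contDiff_const.mul (hridge j)),
    Finset.sum_apply, sum_apply]
  refine Finset.sum_congr rfl fun j _ => ?_
  have hscale := iteratedFDeriv_const_smul_apply' (a := a j) (hridge j).contDiffAt (x := x)
  simp only [smul_eq_mul] at hscale
  rw [hscale, smul_apply, smul_eq_mul, iteratedFDeriv_ridge_apply hσ]

end RidgeDerivatives

theorem cross_moment_CP_decomposition_general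
    (d k : ℕ) (p : EuclideanSpace ℝ (Fin d) → ℝ)
    (σ : ℝ → ℝ) (hσ : ContDiff ℝ 3 σ)
    (A1 : Fin k → EuclideanSpace ℝ (Fin d)) (a2 b1 : Fin k → ℝ) (b2 : ℝ)
    (f : EuclideanSpace ℝ (Fin d) → ℝ)
    (hf : ∀ x, f x = (∑ j, a2 j * σ ((inner ℝ (A1 j) x : ℝ) + b1 j)) + b2)
    (μ : Measure (EuclideanSpace ℝ (Fin d)))
    (hStein : ∀ v1 v2 v3 : EuclideanSpace ℝ (Fin d),
      ∫ x, f x * (-(p x)⁻¹ * iteratedFDeriv ℝ 3 p x ![v1, v2, v3]) ∂μ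
        = ∫ x, iteratedFDeriv ℝ 3 f x ![v1, v2, v3] ∂μ)
    (hIntσ : ∀ j, Integrable
      (fun x => deriv (deriv (deriv σ)) ((inner ℝ (A1 j) x : ℝ) + b1 j)) μ) :
    ∀ i1 i2 i3 : Fin d,
      ∫ x, f x * (-(p x)⁻¹ * iteratedFDeriv ℝ 3 p x
          ![EuclideanSpace.single i1 (1 : ℝ), EuclideanSpace.single i2 (1 : ℝ),
            EuclideanSpace.single i3 (1 : ℝ)]) ∂μ
        = ∑ j, ((∫ x, deriv (deriv (deriv σ)) ((inner ℝ (A1 j) x : ℝ) + b1 j) ∂μ) * a2 j)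
            * (A1 j i1 * A1 j i2 * A1 j i3) := by
  intro i1 i2 i3
  obtain rfl : f = fun x => (∑ j, a2 j * σ ((inner ℝ (A1 j) x : ℝ) + b1 j)) + b2 := funext hf
  have hσ''' : iteratedDeriv 3 σ = deriv (deriv (deriv σ)) := by
    simp only [iteratedDeriv_succ, iteratedDeriv_zero]
  have hcoord : ∀ j i, inner ℝ (A1 j) (EuclideanSpace.single i (1 : ℝ)) = A1 j i := by
    simp [EuclideanSpace.inner_single_right]
  simp only [hStein, iteratedFDeriv_twoLayer_apply three_ne_zero hσ, hσ''', hcoord,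
    Fin.prod_univ_three, Matrix.cons_val_zero, Matrix.cons_val_one, Matrix.cons_val_two,
    Matrix.tail_cons, Matrix.head_cons]
  rw [integral_finsetSum _ fun j _ => ((hIntσ j).mul_const _).const_mul _]
  refine Finset.sum_congr rfl fun j _ => ?_
  rw [integral_const_mul, integral_mul_const]
  ring

/-- For the two-layer neural network label function
`f̃(x) = ⟨a₂, σ(A₁ᵀ x + b₁)⟩ + b₂`, with `x` having a smooth density `p` and assuming the
Stein-type identity `E[f̃(x)·S₃(x)] = E[∇^{(3)} f̃(x)]`, the cross-moment between the label
and the third-order score function `S₃(x) = -∇^{(3)}p(x)/p(x)` has the CP decomposition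
`E[ỹ · S₃(x)] = Σ_j λ_j (A₁)_j ⊗ (A₁)_j ⊗ (A₁)_j` with
`λ_j = E[σ'''(z_j)]·a₂(j)`, `z = A₁ᵀ x + b₁`, stated entrywise. -/
theorem cross_moment_CP_decomposition
    (d k : ℕ) (p : EuclideanSpace ℝ (Fin d) → ℝ)
    (hp : ContDiff ℝ 3 p) (hppos : ∀ x, 0 < p x)
    (σ : ℝ → ℝ) (hσ : ContDiff ℝ 3 σ)
    (A1 : Fin k → EuclideanSpace ℝ (Fin d)) (a2 b1 : Fin k → ℝ) (b2 : ℝ)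
    (f : EuclideanSpace ℝ (Fin d) → ℝ)
    (hf : ∀ x, f x = (∑ j, a2 j * σ ((inner ℝ (A1 j) x : ℝ) + b1 j)) + b2)
    (μ : Measure (EuclideanSpace ℝ (Fin d)))
    (hμ : μ = volume.withDensity (fun x => ENNReal.ofReal (p x)))
    (hμprob : IsProbabilityMeasure μ)
    (hStein : ∀ v1 v2 v3 : EuclideanSpace ℝ (Fin d),
      ∫ x, f x * (-(p x)⁻¹ * iteratedFDeriv ℝ 3 p x ![v1, v2, v3]) ∂μ
        = ∫ x, iteratedFDeriv ℝ 3 f x ![v1, v2, v3] ∂μ)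
    (hIntS : ∀ v1 v2 v3 : EuclideanSpace ℝ (Fin d),
      Integrable (fun x => f x * (-(p x)⁻¹ * iteratedFDeriv ℝ 3 p x ![v1, v2, v3])) μ)
    (hIntσ : ∀ j, Integrable
      (fun x => deriv (deriv (deriv σ)) ((inner ℝ (A1 j) x : ℝ) + b1 j)) μ) :
    ∀ i1 i2 i3 : Fin d,
      ∫ x, f x * (-(p x)⁻¹ * iteratedFDeriv ℝ 3 p x
          ![EuclideanSpace.single i1 (1 : ℝ), EuclideanSpace.single i2 (1 : ℝ),
            EuclideanSpace.single i3 (1 : ℝ)]) ∂μ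
        = ∑ j, ((∫ x, deriv (deriv (deriv σ)) ((inner ℝ (A1 j) x : ℝ) + b1 j) ∂μ) * a2 j)
            * (A1 j i1 * A1 j i2 * A1 j i3) :=
  cross_moment_CP_decomposition_general d k p σ hσ A1 a2 b1 b2 f hf μ hStein hIntσ
end

section
/- Under the same setting, the second-order cross-moment satisfies E[ỹ · S_2(x)] = Σ_{j=1}^k λ̃_j · (A_1)_j ⊗ (A_1)_j, where λ̃_j = E[σ''(z_j)] · a_2(j). -/
/-!
The Stein identity turns the cross-moment into `E[∇²f]`. The network is an affine combination of
ridge functions `σ(⟪a, x⟫ + b)`, whose Hessian is `σ''(⟪a, x⟫ + b) a ⊗ a` because `σ` is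
precomposed with the affine map `x ↦ ⟪a, x⟫ + b`; integrating term by term gives the weights `λ̃_j`.
-/

open MeasureTheory
open scoped RealInnerProductSpace

section RidgeFunctions

variable {E : Type*} [NormedAddCommGroup E] [InnerProductSpace ℝ E] {σ : ℝ → ℝ}

theorem iteratedFDeriv_two_ridge_apply (hσ : ContDiff ℝ 2 σ) (a : E) (b : ℝ) (x v w : E) :
    iteratedFDeriv ℝ 2 (fun y => σ (⟪a, y⟫ + b)) x ![v, w]
      = deriv (deriv σ) (⟪a, x⟫ + b) * ⟪a, v⟫ * ⟪a, w⟫ := by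
  have hshift : ContDiff ℝ 2 (fun t => σ (t + b)) := hσ.comp (contDiff_id.add contDiff_const)
  have hcomp := (innerSL ℝ a).iteratedFDeriv_comp_right hshift x le_rfl
  simp only [Function.comp_def, innerSL_apply_apply] at hcomp
  rw [hcomp, ContinuousMultilinearMap.compContinuousLinearMap_apply,
    iteratedFDeriv_apply_eq_iteratedDeriv_mul_prod, iteratedDeriv_comp_add_const,
    iteratedDeriv_succ, iteratedDeriv_one, Fin.prod_univ_two]
  simp only [Matrix.cons_val_zero, Matrix.cons_val_one, innerSL_apply_apply]
  ring

theorem iteratedFDeriv_two_sum_ridge_add_const_apply {ι : Type*} (s : Finset ι)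
    (hσ : ContDiff ℝ 2 σ) (a : ι → E) (c b : ι → ℝ) (b₀ : ℝ) (x v w : E) :
    iteratedFDeriv ℝ 2 (fun y => (∑ j ∈ s, c j * σ (⟪a j, y⟫ + b j)) + b₀) x ![v, w]
      = ∑ j ∈ s, c j * deriv (deriv σ) (⟪a j, x⟫ + b j) * ⟪a j, v⟫ * ⟪a j, w⟫ := by
  have hridge : ∀ j, ContDiff ℝ 2 (fun y : E => σ (⟪a j, y⟫ + b j)) := fun j =>
    hσ.comp (((innerSL ℝ (a j)).contDiff).add contDiff_const)
  have hterm : ∀ j, ContDiff ℝ 2 (fun y : E => c j * σ (⟪a j, y⟫ + b j)) := fun j =>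
    contDiff_const.mul (hridge j)
  rw [fun_iteratedFDeriv_add_apply (ContDiff.sum fun j _ => hterm j).contDiffAt contDiffAt_const,
    iteratedFDeriv_const_of_ne two_ne_zero, Pi.zero_apply, add_zero,
    iteratedFDeriv_sum fun j _ => hterm j]
  simp only [sum_apply, Finset.sum_apply]
  refine Finset.sum_congr rfl fun j _ => ?_
  simp only [← smul_eq_mul (a := c j)]
  rw [iteratedFDeriv_const_smul_apply' (hridge j).contDiffAt, smul_apply,
    iteratedFDeriv_two_ridge_apply hσ, smul_eq_mul]
  ring

end RidgeFunctions
theorem second_cross_moment_decomposition_general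
    (d k : ℕ) (p : EuclideanSpace ℝ (Fin d) → ℝ)
    (σ : ℝ → ℝ) (hσ : ContDiff ℝ 2 σ)
    (A1 : Fin k → EuclideanSpace ℝ (Fin d)) (a2 b1 : Fin k → ℝ) (b2 : ℝ)
    (f : EuclideanSpace ℝ (Fin d) → ℝ)
    (hf : ∀ x, f x = (∑ j, a2 j * σ ((inner ℝ (A1 j) x : ℝ) + b1 j)) + b2)
    (μ : Measure (EuclideanSpace ℝ (Fin d)))
    (hStein : ∀ v1 v2 : EuclideanSpace ℝ (Fin d),
      ∫ x, f x * ((p x)⁻¹ * iteratedFDeriv ℝ 2 p x ![v1, v2]) ∂μ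
        = ∫ x, iteratedFDeriv ℝ 2 f x ![v1, v2] ∂μ)
    (hIntσ : ∀ j, Integrable
      (fun x => deriv (deriv σ) ((inner ℝ (A1 j) x : ℝ) + b1 j)) μ) :
    ∀ i1 i2 : Fin d,
      ∫ x, f x * ((p x)⁻¹ * iteratedFDeriv ℝ 2 p x
          ![EuclideanSpace.single i1 (1 : ℝ), EuclideanSpace.single i2 (1 : ℝ)]) ∂μ
        = ∑ j, ((∫ x, deriv (deriv σ) ((inner ℝ (A1 j) x : ℝ) + b1 j) ∂μ) * a2 j)
            * (A1 j i1 * A1 j i2) := by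
  intro i1 i2
  obtain rfl : f = _ := funext hf
  simp only [hStein, iteratedFDeriv_two_sum_ridge_add_const_apply _ hσ,
    EuclideanSpace.inner_single_right, one_mul, conj_trivial]
  rw [integral_finsetSum _ fun j _ =>
    (((hIntσ j).const_mul (a2 j)).mul_const (A1 j i1)).mul_const (A1 j i2)]
  refine Finset.sum_congr rfl fun j _ => ?_
  rw [integral_mul_const, integral_mul_const, integral_const_mul]
  ring

/-- In the same two-layer neural network setting
`f̃(x) = ⟨a₂, σ(A₁ᵀ x + b₁)⟩ + b₂`, assuming the Stein identity
`E[f̃(x)·S₂(x)] = E[∇^{(2)} f̃(x)]` with `S₂(x) = ∇^{(2)}p(x)/p(x)`, the second-order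
cross-moment satisfies `E[ỹ · S₂(x)] = Σ_j λ̃_j (A₁)_j ⊗ (A₁)_j` with
`λ̃_j = E[σ''(z_j)]·a₂(j)`, stated entrywise. -/
theorem second_cross_moment_decomposition
    (d k : ℕ) (p : EuclideanSpace ℝ (Fin d) → ℝ)
    (hp : ContDiff ℝ 2 p) (hppos : ∀ x, 0 < p x)
    (σ : ℝ → ℝ) (hσ : ContDiff ℝ 2 σ)
    (A1 : Fin k → EuclideanSpace ℝ (Fin d)) (a2 b1 : Fin k → ℝ) (b2 : ℝ)
    (f : EuclideanSpace ℝ (Fin d) → ℝ)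
    (hf : ∀ x, f x = (∑ j, a2 j * σ ((inner ℝ (A1 j) x : ℝ) + b1 j)) + b2)
    (μ : Measure (EuclideanSpace ℝ (Fin d)))
    (hμ : μ = volume.withDensity (fun x => ENNReal.ofReal (p x)))
    (hμprob : IsProbabilityMeasure μ)
    (hStein : ∀ v1 v2 : EuclideanSpace ℝ (Fin d),
      ∫ x, f x * ((p x)⁻¹ * iteratedFDeriv ℝ 2 p x ![v1, v2]) ∂μ
        = ∫ x, iteratedFDeriv ℝ 2 f x ![v1, v2] ∂μ)
    (hIntS : ∀ v1 v2 : EuclideanSpace ℝ (Fin d),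
      Integrable (fun x => f x * ((p x)⁻¹ * iteratedFDeriv ℝ 2 p x ![v1, v2])) μ)
    (hIntσ : ∀ j, Integrable
      (fun x => deriv (deriv σ) ((inner ℝ (A1 j) x : ℝ) + b1 j)) μ) :
    ∀ i1 i2 : Fin d,
      ∫ x, f x * ((p x)⁻¹ * iteratedFDeriv ℝ 2 p x
          ![EuclideanSpace.single i1 (1 : ℝ), EuclideanSpace.single i2 (1 : ℝ)]) ∂μ
        = ∑ j, ((∫ x, deriv (deriv σ) ((inner ℝ (A1 j) x : ℝ) + b1 j) ∂μ) * a2 j)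
            * (A1 j i1 * A1 j i2) :=
  second_cross_moment_decomposition_general d k p σ hσ A1 a2 b1 b2 f hf μ hStein hIntσ
end

section
/- Let M_2 = A Diag(λ̃) A^T for A ∈ R^{d×k} of full column rank k and λ̃ ∈ R^k with positive entries, and let M_2 = U Diag(γ) U^T be its rank-k SVD. Define the whitening matrix W := U Diag(γ^{-1/2}). Then the matrix V := W^T A Diag(λ̃^{1/2}) ∈ R^{k×k} is orthogonal: V V^T = V^T V = I_k. -/
open Matrix

/-! Writing `B := A Diag(λ̃^{1/2})`, the hypothesis says `B Bᵀ = U Diag(γ) Uᵀ`, so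
`V Vᵀ = Wᵀ B Bᵀ W = Diag(γ^{-1/2}) (UᵀU) Diag(γ) (UᵀU) Diag(γ^{-1/2}) = I`; a one-sided
inverse of a square matrix is two-sided. -/

namespace Matrix

variable {m n R : Type*} [Fintype n] [DecidableEq n]

theorem mul_transpose_self_eq_one_of_whitening [Fintype m] [CommRing R]
    {U B : Matrix m n R} {Γ E : Matrix n n R}
    (hU : Uᵀ * U = 1) (hB : B * Bᵀ = U * Γ * Uᵀ) (hE : Eᵀ * Γ * E = 1) :
    ((U * E)ᵀ * B) * ((U * E)ᵀ * B)ᵀ = 1 := by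
  calc ((U * E)ᵀ * B) * ((U * E)ᵀ * B)ᵀ = Eᵀ * (Uᵀ * (B * Bᵀ) * U) * E := by
        simp only [transpose_mul, transpose_transpose, Matrix.mul_assoc]
    _ = Eᵀ * Γ * E := by
        have hUΓU : Uᵀ * (U * Γ * Uᵀ) * U = (Uᵀ * U) * Γ * (Uᵀ * U) := by
          simp only [Matrix.mul_assoc]
        rw [hB, hUΓU, hU, Matrix.one_mul, Matrix.mul_one, Matrix.mul_assoc]
    _ = 1 := hE

theorem mul_diagonal_sqrt_mul_transpose (A : Matrix m n ℝ) {f : n → ℝ} (hf : ∀ i, 0 ≤ f i) :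
    (A * diagonal (fun i => √(f i))) * (A * diagonal (fun i => √(f i)))ᵀ
      = A * diagonal f * Aᵀ := by
  rw [transpose_mul, diagonal_transpose, Matrix.mul_assoc, ← Matrix.mul_assoc (diagonal _),
    diagonal_mul_diagonal, ← Matrix.mul_assoc]
  congr 3
  exact funext fun i => Real.mul_self_sqrt (hf i)

theorem diagonal_inv_sqrt_mul_diagonal_mul_diagonal_inv_sqrt {f : n → ℝ} (hf : ∀ i, 0 < f i) :
    (diagonal fun i => (√(f i))⁻¹) * diagonal f * diagonal (fun i => (√(f i))⁻¹) = 1 := by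
  rw [diagonal_mul_diagonal, diagonal_mul_diagonal, ← diagonal_one]
  congr 1
  funext i
  have hsq : √(f i) * √(f i) = f i := Real.mul_self_sqrt (hf i).le
  have hpos : 0 < √(f i) := Real.sqrt_pos.2 (hf i)
  field_simp
  linarith

end Matrix

theorem whitening_orthogonal_general
    (d k : ℕ)
    (A : Matrix (Fin d) (Fin k) ℝ)
    (lam : Fin k → ℝ) (hlam : ∀ j, 0 < lam j)
    (U : Matrix (Fin d) (Fin k) ℝ) (hU : Uᵀ * U = 1)
    (γ : Fin k → ℝ) (hγ : ∀ j, 0 < γ j)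
    (hSVD : U * diagonal γ * Uᵀ = A * diagonal lam * Aᵀ)
    (W : Matrix (Fin d) (Fin k) ℝ)
    (hW : W = U * diagonal (fun j => (Real.sqrt (γ j))⁻¹))
    (V : Matrix (Fin k) (Fin k) ℝ)
    (hV : V = Wᵀ * A * diagonal (fun j => Real.sqrt (lam j))) :
    V * Vᵀ = 1 ∧ Vᵀ * V = 1 := by
  have hVV : V * Vᵀ = 1 := by
    have hVB : V = (U * diagonal fun j => (√(γ j))⁻¹)ᵀ * (A * diagonal fun j => √(lam j)) := by
      rw [hV, hW, Matrix.mul_assoc]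
    rw [hVB]
    refine mul_transpose_self_eq_one_of_whitening (Γ := diagonal γ) hU ?_ ?_
    · rw [mul_diagonal_sqrt_mul_transpose A fun j => (hlam j).le, hSVD]
    · rw [diagonal_transpose, diagonal_inv_sqrt_mul_diagonal_mul_diagonal_inv_sqrt hγ]
  exact ⟨hVV, mul_eq_one_comm.mp hVV⟩

/-- Whitening. Let `M₂ = A Diag(λ̃) Aᵀ` with `A ∈ ℝ^{d×k}` of full column
rank and `λ̃ > 0`, and let `M₂ = U Diag(γ) Uᵀ` be its rank-k SVD (`U` with orthonormal
columns, `γ > 0`). With whitening matrix `W := U Diag(γ^{-1/2})`, the matrix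
`V := Wᵀ A Diag(λ̃^{1/2})` is orthogonal: `V Vᵀ = Vᵀ V = I_k`. -/
theorem whitening_orthogonal
    (d k : ℕ) (hkd : k ≤ d)
    (A : Matrix (Fin d) (Fin k) ℝ) (hA : A.rank = k)
    (lam : Fin k → ℝ) (hlam : ∀ j, 0 < lam j)
    (U : Matrix (Fin d) (Fin k) ℝ) (hU : Uᵀ * U = 1)
    (γ : Fin k → ℝ) (hγ : ∀ j, 0 < γ j)
    (hSVD : U * diagonal γ * Uᵀ = A * diagonal lam * Aᵀ)
    (W : Matrix (Fin d) (Fin k) ℝ)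
    (hW : W = U * diagonal (fun j => (Real.sqrt (γ j))⁻¹))
    (V : Matrix (Fin k) (Fin k) ℝ)
    (hV : V = Wᵀ * A * diagonal (fun j => Real.sqrt (lam j))) :
    V * Vᵀ = 1 ∧ Vᵀ * V = 1 :=
  whitening_orthogonal_general d k A lam hlam U hU γ hγ hSVD W hW V hV
end

section
/- In the whitening setup, applying W to the tensor T = Σ_j λ_j (A)_j^{⊗3} gives T(W,W,W) = Σ_j μ_j v_j^{⊗3}, where μ_j = λ_j / λ̃_j^{3/2} and v_j = √(λ̃_j) W^T (A)_j form an orthonormal basis of R^k. -/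
/-!
By multilinearity, `T(W,W,W) = Σ_j λ_j (Wᵀ a_j)^{⊗3}`, and `λ_j (Wᵀ a_j)^{⊗3} = μ_j v_j^{⊗3}`
after pulling `√λ̃_j` out of each `v_j`. The matrix `B` with rows `v_j` is `Diag(√λ̃) Aᵀ W`, so
`Bᵀ B = Wᵀ M₂ W = Diag(γ^{-1/2}) Diag(γ) Diag(γ^{-1/2}) = 1`; as `B` is square, also `B Bᵀ = 1`,
which is the orthonormality of the rows.
-/

open Matrix

theorem Matrix.transpose_mul_self_diagonal_sqrt_mul {m p : Type*} [Fintype m] [DecidableEq m]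
    (X : Matrix m p ℝ) {s : m → ℝ} (hs : ∀ j, 0 ≤ s j) :
    (diagonal (fun j => √(s j)) * X)ᵀ * (diagonal (fun j => √(s j)) * X)
      = Xᵀ * diagonal s * X := by
  have hsq : diagonal (fun j => √(s j)) * diagonal (fun j => √(s j)) = diagonal s := by
    rw [diagonal_mul_diagonal]
    exact congrArg diagonal (funext fun j => Real.mul_self_sqrt (hs j))
  rw [transpose_mul, diagonal_transpose, Matrix.mul_assoc, ← Matrix.mul_assoc _ _ X, hsq,
    Matrix.mul_assoc]

theorem Matrix.whitening_transpose_mul_mul_whitening {m n : Type*} [Fintype m] [Fintype n]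
    [DecidableEq n] {U : Matrix m n ℝ} (hU : Uᵀ * U = 1) {γ : n → ℝ} (hγ : ∀ j, 0 < γ j) :
    (U * diagonal fun j => (√(γ j))⁻¹)ᵀ * (U * diagonal γ * Uᵀ)
      * (U * diagonal fun j => (√(γ j))⁻¹) = 1 := by
  calc _ = (diagonal fun j => (√(γ j))⁻¹) * (Uᵀ * U) * diagonal γ * (Uᵀ * U)
        * (diagonal fun j => (√(γ j))⁻¹) := by
          simp only [transpose_mul, diagonal_transpose, Matrix.mul_assoc]
    _ = diagonal fun j => (√(γ j))⁻¹ * γ j * (√(γ j))⁻¹ := by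
          simp only [hU, Matrix.mul_one, diagonal_mul_diagonal]
    _ = 1 := by
          rw [← diagonal_one]
          congr 1
          funext j
          have := (Real.sqrt_pos.2 (hγ j)).ne'
          field_simp
          exact (Real.sq_sqrt (hγ j).le).symm

theorem Matrix.contract_sum_cube_eq_sum_cube_transpose_mul {n m p R : Type*} [Fintype n]
    [Fintype m] [CommSemiring R]
    (lam : m → R) (A : Matrix n m R) (W : Matrix n p R) (i j l : p) :
    ∑ a, ∑ b, ∑ c, (∑ r, lam r * A a r * A b r * A c r) * W a i * W b j * W c l
      = ∑ r, lam r * (Wᵀ * A) i r * (Wᵀ * A) j r * (Wᵀ * A) l r := by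
  simp only [mul_apply, transpose_apply, Finset.sum_mul, Finset.mul_sum]
  simp_rw [Finset.sum_comm (γ := m) (α := n)]
  rw [Finset.sum_comm_cycle]
  refine Finset.sum_congr rfl fun c _ => ?_
  rw [Finset.sum_comm]
  exact Finset.sum_congr rfl fun b _ => Finset.sum_congr rfl fun a _ =>
    Finset.sum_congr rfl fun r _ => by ring

theorem whitened_tensor_decomposition_general
    (d k : ℕ)
    (A : Matrix (Fin d) (Fin k) ℝ)
    (lam lamt : Fin k → ℝ) (hlamt : ∀ j, 0 < lamt j)
    (U : Matrix (Fin d) (Fin k) ℝ) (hU : Uᵀ * U = 1)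
    (γ : Fin k → ℝ) (hγ : ∀ j, 0 < γ j)
    (hSVD : U * diagonal γ * Uᵀ = A * diagonal lamt * Aᵀ)
    (W : Matrix (Fin d) (Fin k) ℝ)
    (hW : W = U * diagonal (fun j => (Real.sqrt (γ j))⁻¹))
    (T : Fin d → Fin d → Fin d → ℝ)
    (hT : ∀ a b c, T a b c = ∑ j, lam j * A a j * A b j * A c j)
    (v : Fin k → Fin k → ℝ)
    (hv : ∀ j i, v j i = Real.sqrt (lamt j) * ∑ a, W a i * A a j) :
    (∀ i j l : Fin k,
        (∑ a, ∑ b, ∑ c, T a b c * W a i * W b j * W c l)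
          = ∑ j', (lam j' / Real.sqrt (lamt j') ^ 3) * v j' i * v j' j * v j' l)
      ∧ (∀ j1 j2 : Fin k, (∑ i, v j1 i * v j2 i) = if j1 = j2 then 1 else 0) := by
  have hv_col : ∀ j i, v j i = √(lamt j) * (Wᵀ * A) i j := by simp [hv, mul_apply]
  refine ⟨fun i j l => ?_, fun j1 j2 => ?_⟩
  · simp only [hT, contract_sum_cube_eq_sum_cube_transpose_mul, hv_col]
    refine Finset.sum_congr rfl fun r _ => ?_
    have := (Real.sqrt_pos.2 (hlamt r)).ne'
    field_simp
  · set B := diagonal (fun j => √(lamt j)) * (Aᵀ * W)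
    have hBv : ∀ j i, B j i = v j i := fun j i => by
      rw [hv_col, ← transpose_apply (Wᵀ * A), transpose_mul, transpose_transpose]
      exact diagonal_mul ..
    have hB : Bᵀ * B = 1 := by
      rw [transpose_mul_self_diagonal_sqrt_mul _ fun j => (hlamt j).le, transpose_mul,
        transpose_transpose, ← whitening_transpose_mul_mul_whitening hU hγ, ← hW, hSVD]
      simp only [Matrix.mul_assoc]
    have hBBt : B * Bᵀ = 1 := mul_eq_one_comm.mp hB
    simpa [mul_apply, one_apply, hBv] using congr_fun₂ hBBt j1 j2

/-- In the whitening setup, applying `W` to the tensor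
`T = Σ_j λ_j (A)_j^{⊗3}` gives `T(W,W,W) = Σ_j μ_j v_j^{⊗3}` where
`μ_j = λ_j / λ̃_j^{3/2}` and `v_j = √λ̃_j · Wᵀ (A)_j` form an orthonormal basis of `ℝ^k`.
Stated entrywise, together with orthonormality of the `v_j`. -/
theorem whitened_tensor_decomposition
    (d k : ℕ) (hkd : k ≤ d)
    (A : Matrix (Fin d) (Fin k) ℝ) (hA : A.rank = k)
    (lam lamt : Fin k → ℝ) (hlamt : ∀ j, 0 < lamt j)
    (U : Matrix (Fin d) (Fin k) ℝ) (hU : Uᵀ * U = 1)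
    (γ : Fin k → ℝ) (hγ : ∀ j, 0 < γ j)
    (hSVD : U * diagonal γ * Uᵀ = A * diagonal lamt * Aᵀ)
    (W : Matrix (Fin d) (Fin k) ℝ)
    (hW : W = U * diagonal (fun j => (Real.sqrt (γ j))⁻¹))
    (T : Fin d → Fin d → Fin d → ℝ)
    (hT : ∀ a b c, T a b c = ∑ j, lam j * A a j * A b j * A c j)
    (v : Fin k → Fin k → ℝ)
    (hv : ∀ j i, v j i = Real.sqrt (lamt j) * ∑ a, W a i * A a j) :
    (∀ i j l : Fin k,
        (∑ a, ∑ b, ∑ c, T a b c * W a i * W b j * W c l)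
          = ∑ j', (lam j' / Real.sqrt (lamt j') ^ 3) * v j' i * v j' j * v j' l)
      ∧ (∀ j1 j2 : Fin k, (∑ i, v j1 i * v j2 i) = if j1 = j2 then 1 else 0) :=
  whitened_tensor_decomposition_general d k A lam lamt hlamt U hU γ hγ hSVD W hW T hT v hv
end

section
/- Given the un-whitening map, errors in the whitened components translate to the original space with factor bounded as: ‖(A)_j - (Â)_j‖ ≤ s_max(A) · √(λ̃_max/λ̃_min) · ‖v_j - v̂_j‖, where (Â)_j := (1/√(λ̃_j)) U Diag(γ^{1/2}) v̂_j. -/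
/-!
The column space of `A` lies in that of `U`, both being the range of
`M₂ = A Diag(λ̃) Aᵀ = U Diag(γ) Uᵀ`. Hence un-whitening inverts whitening on the columns of `A`,
and `(A)_j - (Â)_j = λ̃_j^{-1/2} U Diag(γ^{1/2}) (v_j - v̂_j)`. As `U` is an isometry, this has norm
at most `λ̃_min^{-1/2} γ_max^{1/2} ‖v_j - v̂_j‖`, while `γ_max = ‖Uᵀ M₂ U‖ ≤ ‖A‖² λ̃_max` for the
spectral norm.
-/

open Matrix

open scoped Matrix.Norms.L2Operator

theorem pi_norm_le_sup'_of_nonneg {ι : Type*} [Fintype ι] [Nonempty ι] {f : ι → ℝ}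
    (hf : ∀ i, 0 ≤ f i) : ‖f‖ ≤ Finset.univ.sup' Finset.univ_nonempty f := by
  obtain ⟨i⟩ := ‹Nonempty ι›
  refine (pi_norm_le_iff_of_nonneg ((hf i).trans (Finset.le_sup' f (Finset.mem_univ i)))).2
    fun l => ?_
  rw [Real.norm_of_nonneg (hf l)]
  exact Finset.le_sup' f (Finset.mem_univ l)

theorem EuclideanSpace.norm_toLp_eq_sqrt_sum_sq {n : Type*} [Fintype n] (x : n → ℝ) :
    ‖WithLp.toLp 2 x‖ = √(∑ i, x i ^ 2) := by
  simp [EuclideanSpace.norm_eq]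

namespace Matrix

theorem mul_eq_self_of_mul_mul_conjTranspose_eq {R m n : Type*} [Fintype m] [Fintype n]
    [PartialOrder R] [Ring R] [StarRing R] [StarOrderedRing R] [NoZeroDivisors R]
    {P : Matrix m m R} {B : Matrix m n R} (hP : P.IsHermitian) (h : P * (B * Bᴴ) = B * Bᴴ) :
    P * B = B := by
  have h' : B * (Bᴴ * P) = B * Bᴴ := by
    simpa [Matrix.mul_assoc, hP.eq] using congrArg conjTranspose h
  have hPBBP : P * B * (Bᴴ * P) = B * Bᴴ := by rw [Matrix.mul_assoc, h', h]
  -- each of the four terms of `(P B - B)(P B - B)ᴴ` equals `B Bᴴ`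
  rw [← sub_eq_zero, ← self_mul_conjTranspose_eq_zero, conjTranspose_sub, conjTranspose_mul, hP.eq,
    Matrix.mul_sub, Matrix.sub_mul, Matrix.sub_mul, hPBBP, h', Matrix.mul_assoc, h, sub_self]

section RCLike

variable {𝕜 m n r : Type*} [RCLike 𝕜] [Fintype m] [Fintype n] [Fintype r]

theorem l2_opNorm_le_one_of_conjTranspose_mul_self_eq_one [DecidableEq n] {U : Matrix m n 𝕜}
    (hU : Uᴴ * U = 1) : ‖U‖ ≤ 1 := by
  have h1 : ‖(1 : Matrix n n 𝕜)‖ ≤ 1 := by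
    rw [← diagonal_one, l2_opNorm_diagonal, pi_norm_le_iff_of_nonneg zero_le_one]
    simp
  rw [← hU, l2_opNorm_conjTranspose_mul_self] at h1
  nlinarith [norm_nonneg U]

theorem norm_le_l2_opNorm_sq_mul_norm_of_mul_diagonal_mul_conjTranspose_eq [DecidableEq m]
    [DecidableEq n] [DecidableEq r] {U : Matrix m r 𝕜} {A : Matrix m n 𝕜} {γ : r → 𝕜}
    {μ : n → 𝕜} (hU : Uᴴ * U = 1) (h : U * diagonal γ * Uᴴ = A * diagonal μ * Aᴴ) :
    ‖γ‖ ≤ ‖A‖ ^ 2 * ‖μ‖ := by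
  have hγ : diagonal γ = Uᴴ * (A * diagonal μ * Aᴴ) * U := by
    rw [← h]
    simp only [← Matrix.mul_assoc]
    rw [hU, Matrix.one_mul, Matrix.mul_assoc, hU, Matrix.mul_one]
  rw [← l2_opNorm_diagonal, hγ]
  calc ‖Uᴴ * (A * diagonal μ * Aᴴ) * U‖ ≤ ‖Uᴴ‖ * (‖A‖ * ‖diagonal μ‖ * ‖Aᴴ‖) * ‖U‖ := by
        grw [l2_opNorm_mul, l2_opNorm_mul, l2_opNorm_mul, l2_opNorm_mul]
    _ = ‖U‖ ^ 2 * (‖A‖ ^ 2 * ‖μ‖) := by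
        rw [l2_opNorm_conjTranspose, l2_opNorm_conjTranspose, l2_opNorm_diagonal]
        ring
    _ ≤ ‖A‖ ^ 2 * ‖μ‖ :=
        mul_le_of_le_one_left (by positivity) (pow_le_one₀ (norm_nonneg U)
          (l2_opNorm_le_one_of_conjTranspose_mul_self_eq_one hU))

theorem l2_opNorm_le_of_norm_toEuclideanLin_le [DecidableEq n] [Nonempty n] {A : Matrix m n 𝕜}
    {c : ℝ} (h : ∀ u, ‖toEuclideanLin A u‖ ≤ c * ‖u‖) : ‖A‖ ≤ c := by
  obtain ⟨u, hu⟩ := exists_ne (0 : EuclideanSpace 𝕜 n)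
  have hc : 0 ≤ c :=
    nonneg_of_mul_nonneg_left ((norm_nonneg _).trans (h u)) (norm_pos_iff.2 hu)
  exact ContinuousLinearMap.opNorm_le_bound _ hc h

theorem norm_toLp_mulVec_le [DecidableEq n] (B : Matrix m n 𝕜) (x : n → 𝕜) :
    ‖WithLp.toLp 2 (B *ᵥ x)‖ ≤ ‖B‖ * ‖WithLp.toLp 2 x‖ := by
  simpa using B.l2_opNorm_mulVec (WithLp.toLp 2 x)

end RCLike

section Real

variable {m n r : Type*} [Fintype r] [DecidableEq r]

theorem mul_transpose_mul_eq_self_of_mul_diagonal_mul_transpose_eq [Fintype m] [Fintype n]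
    [DecidableEq n] {U : Matrix m r ℝ} {A : Matrix m n ℝ} {γ : r → ℝ} {μ : n → ℝ}
    (hμ : ∀ j, 0 < μ j) (hU : Uᵀ * U = 1) (h : U * diagonal γ * Uᵀ = A * diagonal μ * Aᵀ) :
    U * Uᵀ * A = A := by
  set B := A * diagonal fun j => √(μ j)
  have hBB : B * Bᴴ = A * diagonal μ * Aᵀ := by
    rw [conjTranspose_eq_transpose_of_trivial, transpose_mul, diagonal_transpose, Matrix.mul_assoc,
      ← Matrix.mul_assoc (diagonal _), diagonal_mul_diagonal, ← Matrix.mul_assoc]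
    simp_rw [Real.mul_self_sqrt (hμ _).le]
  have hPB : U * Uᵀ * B = B := by
    refine mul_eq_self_of_mul_mul_conjTranspose_eq ?_ ?_
    · simp [IsHermitian, conjTranspose_eq_transpose_of_trivial]
    · rw [hBB, ← h]
      simp only [← Matrix.mul_assoc]
      rw [Matrix.mul_assoc U Uᵀ U, hU, Matrix.mul_one]
  have hBA : B * diagonal (fun j => (√(μ j))⁻¹) = A := by
    rw [Matrix.mul_assoc, diagonal_mul_diagonal]
    simp_rw [mul_inv_cancel₀ (Real.sqrt_pos.2 (hμ _)).ne']
    rw [diagonal_one, Matrix.mul_one]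
  rw [← hBA, ← Matrix.mul_assoc, hPB]

theorem mul_diagonal_sqrt_mul_transpose_mul_diagonal_inv_sqrt {U : Matrix m r ℝ} {γ : r → ℝ}
    (hγ : ∀ l, 0 < γ l) :
    U * diagonal (fun l => √(γ l)) * (U * diagonal fun l => (√(γ l))⁻¹)ᵀ = U * Uᵀ := by
  rw [transpose_mul, diagonal_transpose, Matrix.mul_assoc, ← Matrix.mul_assoc (diagonal _),
    diagonal_mul_diagonal]
  simp_rw [mul_inv_cancel₀ (Real.sqrt_pos.2 (hγ _)).ne']
  rw [diagonal_one, Matrix.one_mul]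

theorem l2_opNorm_mul_diagonal_sqrt_le [Fintype m] {U : Matrix m r ℝ} (hU : Uᵀ * U = 1)
    {γ : r → ℝ} {c : ℝ} (hγ : ∀ l, γ l ≤ c) : ‖U * diagonal fun l => √(γ l)‖ ≤ √c := by
  rw [← conjTranspose_eq_transpose_of_trivial] at hU
  calc ‖U * diagonal fun l => √(γ l)‖ ≤ ‖U‖ * ‖fun l => √(γ l)‖ := by
        grw [l2_opNorm_mul, l2_opNorm_diagonal]
    _ ≤ 1 * √c := by
        gcongr
        · exact l2_opNorm_le_one_of_conjTranspose_mul_self_eq_one hU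
        · refine (pi_norm_le_iff_of_nonneg (Real.sqrt_nonneg c)).2 fun l => ?_
          rw [Real.norm_of_nonneg (Real.sqrt_nonneg _)]
          exact Real.sqrt_le_sqrt (hγ l)
    _ = √c := one_mul _

theorem l2_opNorm_mul_diagonal_sqrt_le_of_mul_diagonal_mul_transpose_eq [Fintype m]
    [DecidableEq m] [Fintype n] [DecidableEq n] {U : Matrix m r ℝ} {A : Matrix m n ℝ}
    {γ : r → ℝ} {μ : n → ℝ} (hU : Uᵀ * U = 1) (h : U * diagonal γ * Uᵀ = A * diagonal μ * Aᵀ) :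
    ‖U * diagonal fun l => √(γ l)‖ ≤ ‖A‖ * √‖μ‖ := by
  have hγ : ∀ l, γ l ≤ ‖A‖ ^ 2 * ‖μ‖ := fun l => by
    simp only [← conjTranspose_eq_transpose_of_trivial] at hU h
    exact (Real.le_norm_self _).trans <| (norm_le_pi_norm γ l).trans <|
      norm_le_l2_opNorm_sq_mul_norm_of_mul_diagonal_mul_conjTranspose_eq hU h
  simpa [Real.sqrt_mul (sq_nonneg _), Real.sqrt_sq (norm_nonneg _)]
    using l2_opNorm_mul_diagonal_sqrt_le hU hγ

end Real

end Matrix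

theorem unwhitening_error_transfer_general
    (d k : ℕ) [NeZero k]
    (A : Matrix (Fin d) (Fin k) ℝ)
    (lamt : Fin k → ℝ) (hlamt : ∀ j, 0 < lamt j)
    (U : Matrix (Fin d) (Fin k) ℝ) (hU : Uᵀ * U = 1)
    (γ : Fin k → ℝ) (hγ : ∀ j, 0 < γ j)
    (hSVD : U * diagonal γ * Uᵀ = A * diagonal lamt * Aᵀ)
    (W : Matrix (Fin d) (Fin k) ℝ)
    (hW : W = U * diagonal (fun j => (Real.sqrt (γ j))⁻¹))
    (v vhat : Fin k → Fin k → ℝ)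
    (hv : ∀ j i, v j i = Real.sqrt (lamt j) * ∑ a, W a i * A a j)
    (Ahat : Matrix (Fin d) (Fin k) ℝ)
    (hAhat : ∀ i j, Ahat i j
      = (Real.sqrt (lamt j))⁻¹ * ∑ l, U i l * Real.sqrt (γ l) * vhat j l)
    (smax : ℝ)
    (hsmax : ∀ u : EuclideanSpace ℝ (Fin k),
      ‖Matrix.toEuclideanLin A u‖ ≤ smax * ‖u‖) :
    ∀ j : Fin k,
      Real.sqrt (∑ i, (A i j - Ahat i j) ^ 2)
        ≤ smax * Real.sqrt
            ((Finset.univ.sup' Finset.univ_nonempty lamt)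
              / (Finset.univ.inf' Finset.univ_nonempty lamt))
          * Real.sqrt (∑ i, (v j i - vhat j i) ^ 2) := by
  intro j
  set lmax := Finset.univ.sup' Finset.univ_nonempty lamt
  set lmin := Finset.univ.inf' Finset.univ_nonempty lamt
  set T := U * diagonal fun l => √(γ l)
  have hcolA : (fun i => A i j) = (√(lamt j))⁻¹ • (T *ᵥ v j) := by
    have hvj : v j = √(lamt j) • (Wᵀ *ᵥ fun a => A a j) := by
      ext i; simp [hv, mulVec, dotProduct, mul_comm]
    rw [hvj, mulVec_smul, mulVec_mulVec, hW,
      mul_diagonal_sqrt_mul_transpose_mul_diagonal_inv_sqrt hγ,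
      inv_smul_smul₀ (Real.sqrt_pos.2 (hlamt j)).ne']
    conv_lhs => rw [← mul_transpose_mul_eq_self_of_mul_diagonal_mul_transpose_eq hlamt hU hSVD]
    ext i; simp only [mul_apply, mulVec, dotProduct]
  have hcolAhat : (fun i => Ahat i j) = (√(lamt j))⁻¹ • (T *ᵥ vhat j) := by
    ext i; simp [hAhat, T, mulVec, dotProduct, mul_diagonal]
  have hdiff : (fun i => A i j - Ahat i j) = (√(lamt j))⁻¹ • (T *ᵥ (v j - vhat j)) := by
    rw [mulVec_sub, smul_sub, ← hcolA, ← hcolAhat]; rfl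
  have hT : ‖T‖ ≤ ‖A‖ * √lmax :=
    (l2_opNorm_mul_diagonal_sqrt_le_of_mul_diagonal_mul_transpose_eq hU hSVD).trans <| by
      gcongr; exact pi_norm_le_sup'_of_nonneg fun l => (hlamt l).le
  have hlmin : 0 < lmin := (Finset.lt_inf'_iff _).2 fun l _ => hlamt l
  rw [← EuclideanSpace.norm_toLp_eq_sqrt_sum_sq, ← EuclideanSpace.norm_toLp_eq_sqrt_sum_sq, hdiff]
  calc ‖WithLp.toLp 2 ((√(lamt j))⁻¹ • (T *ᵥ (v j - vhat j)))‖
      = (√(lamt j))⁻¹ * ‖WithLp.toLp 2 (T *ᵥ (v j - vhat j))‖ := by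
        rw [WithLp.toLp_smul, norm_smul, Real.norm_of_nonneg (by positivity)]
    _ ≤ (√lmin)⁻¹ * (‖A‖ * √lmax * ‖WithLp.toLp 2 (v j - vhat j)‖) := by
        gcongr
        · exact Finset.inf'_le _ (Finset.mem_univ j)
        · exact (norm_toLp_mulVec_le T _).trans (by gcongr)
    _ = ‖A‖ * √(lmax / lmin) * ‖WithLp.toLp 2 (v j - vhat j)‖ := by
        rw [Real.sqrt_div' _ hlmin.le]; ring
    _ ≤ smax * √(lmax / lmin) * ‖WithLp.toLp 2 (v j - vhat j)‖ := by
        gcongr; exact l2_opNorm_le_of_norm_toEuclideanLin_le hsmax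

/-- Given the un-whitening map, errors in the whitened components translate
to the original space with factor bounded as
`‖(A)_j - (Â)_j‖ ≤ s_max(A) · √(λ̃_max/λ̃_min) · ‖v_j - v̂_j‖`, where
`(Â)_j := (1/√λ̃_j) U Diag(γ^{1/2}) v̂_j`. -/
theorem unwhitening_error_transfer
    (d k : ℕ) (hkd : k ≤ d) [NeZero k]
    (A : Matrix (Fin d) (Fin k) ℝ) (hA : A.rank = k)
    (lamt : Fin k → ℝ) (hlamt : ∀ j, 0 < lamt j)
    (U : Matrix (Fin d) (Fin k) ℝ) (hU : Uᵀ * U = 1)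
    (γ : Fin k → ℝ) (hγ : ∀ j, 0 < γ j)
    (hSVD : U * diagonal γ * Uᵀ = A * diagonal lamt * Aᵀ)
    (W : Matrix (Fin d) (Fin k) ℝ)
    (hW : W = U * diagonal (fun j => (Real.sqrt (γ j))⁻¹))
    (v vhat : Fin k → Fin k → ℝ)
    (hv : ∀ j i, v j i = Real.sqrt (lamt j) * ∑ a, W a i * A a j)
    (Ahat : Matrix (Fin d) (Fin k) ℝ)
    (hAhat : ∀ i j, Ahat i j
      = (Real.sqrt (lamt j))⁻¹ * ∑ l, U i l * Real.sqrt (γ l) * vhat j l)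
    (smax : ℝ)
    (hsmax : ∀ u : EuclideanSpace ℝ (Fin k),
      ‖Matrix.toEuclideanLin A u‖ ≤ smax * ‖u‖) :
    ∀ j : Fin k,
      Real.sqrt (∑ i, (A i j - Ahat i j) ^ 2)
        ≤ smax * Real.sqrt
            ((Finset.univ.sup' Finset.univ_nonempty lamt)
              / (Finset.univ.inf' Finset.univ_nonempty lamt))
          * Real.sqrt (∑ i, (v j i - vhat j i) ^ 2) :=
  unwhitening_error_transfer_general d k A lamt hlamt U hU γ hγ hSVD W hW v vhat hv Ahat hAhat smax
    hsmax
end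

section
/- If f is in the closure of the convex hull of a set G in a Hilbert space, with ‖g‖ ≤ b for all g ∈ G and ‖f‖ ≤ b, then for every k ≥ 1 and every c' > b² - ‖f‖², there exists f_k which is a convex combination of k points in G such that ‖f - f_k‖² ≤ c'/k. -/
local notation "⟪" x ", " y "⟫" => @inner ℝ _ _ x y

private lemma maurey_exists_le_wavg {ι : Type} (t : Finset ι) (w v : ι → ℝ)
    (h0 : ∀ i ∈ t, 0 ≤ w i) (h1 : ∑ i ∈ t, w i = 1) :
    ∃ j ∈ t, v j ≤ ∑ i ∈ t, w i * v i := by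
  by_contra h
  push_neg at h
  have hne : ∃ i ∈ t, 0 < w i := by
    by_contra h'
    push_neg at h'
    have : ∑ i ∈ t, w i = 0 :=
      Finset.sum_eq_zero fun i hi => le_antisymm (h' i hi) (h0 i hi)
    rw [this] at h1; norm_num at h1
  obtain ⟨i0, hi0, hwpos⟩ := hne
  set S := ∑ i ∈ t, w i * v i with hS
  have hlt : ∑ i ∈ t, w i * S < ∑ i ∈ t, w i * v i :=
    Finset.sum_lt_sum (fun i hi => mul_le_mul_of_nonneg_left (h i hi).le (h0 i hi))
      ⟨i0, hi0, mul_lt_mul_of_pos_left (h i0 hi0) hwpos⟩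
  rw [← Finset.sum_mul, h1, one_mul] at hlt
  exact lt_irrefl _ hlt

set_option maxHeartbeats 2000000 in
/-- Maurey/Jones/Barron approximation lemma: if `f` is in the closure of
the convex hull of a set `G` in a real Hilbert space, with `‖g‖ ≤ b` for all `g ∈ G` and
`‖f‖ ≤ b`, then for every `k ≥ 1` and every `c' > b² - ‖f‖²`, there is a convex
combination `f_k` of `k` points of `G` such that `‖f - f_k‖² ≤ c'/k`. -/
theorem maurey_convex_hull_approximation
    (H : Type) [NormedAddCommGroup H] [InnerProductSpace ℝ H] [CompleteSpace H]
    (G : Set H) (b : ℝ)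
    (hG : ∀ g ∈ G, ‖g‖ ≤ b)
    (f : H) (hf : ‖f‖ ≤ b)
    (hfcl : f ∈ closure (convexHull ℝ G))
    (k : ℕ) (hk : 1 ≤ k)
    (c' : ℝ) (hc' : b ^ 2 - ‖f‖ ^ 2 < c') :
    ∃ (g : Fin k → H) (w : Fin k → ℝ),
      (∀ i, g i ∈ G) ∧ (∀ i, 0 ≤ w i) ∧ (∑ i, w i) = 1 ∧
      ‖f - ∑ i, w i • g i‖ ^ 2 ≤ c' / k := by
  obtain ⟨m, rfl⟩ : ∃ m, k = m + 1 := ⟨k - 1, by omega⟩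
  have hb : 0 ≤ b := le_trans (norm_nonneg f) hf
  set δ : ℝ := (c' - (b ^ 2 - ‖f‖ ^ 2)) / ((4 * ((m : ℝ) + 1) + 2) * b + 1) with hδdef
  have hden : 0 < (4 * ((m : ℝ) + 1) + 2) * b + 1 := by positivity
  have hδ : 0 < δ := div_pos (by linarith) hden
  set C : ℝ := b ^ 2 - ‖f‖ ^ 2 + (4 * ((m : ℝ) + 1) + 2) * b * δ with hCdef
  have hbδ : 0 ≤ b * δ := mul_nonneg hb hδ.le
  have hm0 : (0 : ℝ) ≤ (m : ℝ) := Nat.cast_nonneg m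
  have hCc' : C ≤ c' := by
    have h1 : (4 * ((m : ℝ) + 1) + 2) * b * δ ≤ ((4 * ((m : ℝ) + 1) + 2) * b + 1) * δ := by
      nlinarith
    have h2 : ((4 * ((m : ℝ) + 1) + 2) * b + 1) * δ = c' - (b ^ 2 - ‖f‖ ^ 2) := by
      rw [hδdef]; field_simp
    linarith
  obtain ⟨f', hf'mem, hff'⟩ := Metric.mem_closure_iff.mp hfcl δ hδ
  have hdist : ‖f - f'‖ < δ := by rwa [← dist_eq_norm]
  rw [convexHull_eq] at hf'mem
  obtain ⟨ι, t, wt, z, hwt0, hwt1, hzG, hcm⟩ := hf'mem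
  have hf'eq : f' = ∑ i ∈ t, wt i • z i := by
    rw [← hcm, Finset.centerMass_eq_of_sum_1 _ _ hwt1]
  have hsum_wz : ∑ i ∈ t, wt i * ⟪f, z i⟫ = ⟪f, f'⟫ := by
    rw [hf'eq, inner_sum]
    exact Finset.sum_congr rfl fun i _ => (real_inner_smul_right _ _ _).symm
  have hinner_ff' : ‖f‖ ^ 2 - b * δ ≤ ⟪f, f'⟫ := by
    have h1 : ⟪f, f - f'⟫ ≤ ‖f‖ * ‖f - f'‖ := real_inner_le_norm _ _
    have h2 : ‖f‖ * ‖f - f'‖ ≤ b * δ :=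
      mul_le_mul hf hdist.le (norm_nonneg _) hb
    have h3 : ⟪f, f - f'⟫ = ‖f‖ ^ 2 - ⟪f, f'⟫ := by
      rw [inner_sub_right, real_inner_self_eq_norm_sq]
    linarith
  have hA : ∑ i ∈ t, wt i * ‖f - z i‖ ^ 2 ≤ b ^ 2 - ‖f‖ ^ 2 + 2 * (b * δ) := by
    have hexp : ∀ i ∈ t, wt i * ‖f - z i‖ ^ 2
        = wt i * ‖f‖ ^ 2 - 2 * (wt i * ⟪f, z i⟫) + wt i * ‖z i‖ ^ 2 := by
      intro i _; rw [norm_sub_sq_real]; ring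
    rw [Finset.sum_congr rfl hexp, Finset.sum_add_distrib, Finset.sum_sub_distrib,
      ← Finset.sum_mul, hwt1, one_mul, ← Finset.mul_sum, hsum_wz]
    have hz2 : ∑ i ∈ t, wt i * ‖z i‖ ^ 2 ≤ b ^ 2 := by
      calc ∑ i ∈ t, wt i * ‖z i‖ ^ 2 ≤ ∑ i ∈ t, wt i * b ^ 2 := by
            refine Finset.sum_le_sum fun i hi => mul_le_mul_of_nonneg_left ?_ (hwt0 i hi)
            have := hG (z i) (hzG i hi)
            nlinarith [norm_nonneg (z i)]
        _ = b ^ 2 := by rw [← Finset.sum_mul, hwt1, one_mul]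
    linarith
  have hnormcc : ∀ (n : ℕ) (g : Fin n → H) (w : Fin n → ℝ), (∀ i, g i ∈ G) →
      (∀ i, 0 ≤ w i) → (∑ i, w i) = 1 → ‖∑ i, w i • g i‖ ≤ b := by
    intro n g w hg hw hw1
    calc ‖∑ i, w i • g i‖ ≤ ∑ i, ‖w i • g i‖ := norm_sum_le _ _
      _ ≤ ∑ i, w i * b := by
          refine Finset.sum_le_sum fun i _ => ?_
          rw [norm_smul, Real.norm_of_nonneg (hw i)]
          exact mul_le_mul_of_nonneg_left (hG _ (hg i)) (hw i)
      _ = b := by rw [← Finset.sum_mul, hw1, one_mul]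
  have key : ∀ n : ℕ, n ≤ m → ∃ (g : Fin (n + 1) → H) (w : Fin (n + 1) → ℝ),
      (∀ i, g i ∈ G) ∧ (∀ i, 0 ≤ w i) ∧ (∑ i, w i) = 1 ∧
      ‖f - ∑ i, w i • g i‖ ^ 2 ≤ C / ((n : ℝ) + 1) := by
    intro n
    induction n with
    | zero =>
      intro _
      obtain ⟨j, hj, hjle⟩ := maurey_exists_le_wavg t wt (fun i => ‖f - z i‖ ^ 2) hwt0 hwt1
      refine ⟨fun _ => z j, fun _ => 1, fun _ => hzG j hj, fun _ => zero_le_one, by simp, ?_⟩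
      have hs : ∑ i : Fin 1, (1 : ℝ) • z j = z j := by simp
      rw [show (∑ i : Fin 1, (fun (_ : Fin 1) => (1:ℝ)) i • (fun (_ : Fin 1) => z j) i) = z j
        from by simp]
      have : ‖f - z j‖ ^ 2 ≤ b ^ 2 - ‖f‖ ^ 2 + 2 * (b * δ) := le_trans hjle hA
      have hC' : b ^ 2 - ‖f‖ ^ 2 + 2 * (b * δ) ≤ C := by rw [hCdef]; nlinarith
      rw [show ((0 : ℕ) : ℝ) + 1 = 1 from by norm_num, div_one]
      linarith
    | succ n ih =>
      intro hn1
      obtain ⟨g, w, hgG, hw0, hw1, hbound⟩ := ih (by omega)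
      set p := ∑ i, w i • g i with hp
      have hpnorm : ‖p‖ ≤ b := hnormcc _ g w hgG hw0 hw1
      have hfp : ‖f - p‖ ≤ 2 * b :=
        le_trans (norm_sub_le _ _) (by linarith)
      obtain ⟨j, hj, hjle⟩ := maurey_exists_le_wavg t wt
        (fun i => 2 * ((n : ℝ) + 1) * ⟪f - p, f - z i⟫ + ‖f - z i‖ ^ 2) hwt0 hwt1
      have hsum_in : ∑ i ∈ t, wt i * ⟪f - p, f - z i⟫ = ⟪f - p, f - f'⟫ := by
        have hwf : ∑ i ∈ t, wt i • (f - z i) = f - f' := by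
          simp_rw [smul_sub]
          rw [Finset.sum_sub_distrib, ← Finset.sum_smul, hwt1, one_smul, hf'eq]
        calc ∑ i ∈ t, wt i * ⟪f - p, f - z i⟫
            = ⟪f - p, ∑ i ∈ t, wt i • (f - z i)⟫ := by
              rw [inner_sum]
              exact Finset.sum_congr rfl fun i _ => (real_inner_smul_right _ _ _).symm
          _ = ⟪f - p, f - f'⟫ := by rw [hwf]
      have havg : ∑ i ∈ t, wt i * (2 * ((n : ℝ) + 1) * ⟪f - p, f - z i⟫ + ‖f - z i‖ ^ 2)
          = 2 * ((n : ℝ) + 1) * ⟪f - p, f - f'⟫ + ∑ i ∈ t, wt i * ‖f - z i‖ ^ 2 := by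
        have hexp : ∀ i ∈ t, wt i * (2 * ((n : ℝ) + 1) * ⟪f - p, f - z i⟫ + ‖f - z i‖ ^ 2)
            = 2 * ((n : ℝ) + 1) * (wt i * ⟪f - p, f - z i⟫) + wt i * ‖f - z i‖ ^ 2 := by
          intro i _; ring
        rw [Finset.sum_congr rfl hexp, Finset.sum_add_distrib, ← Finset.mul_sum, hsum_in]
      rw [havg] at hjle
      have hip : ⟪f - p, f - f'⟫ ≤ 2 * b * δ :=
        le_trans (real_inner_le_norm _ _)
          (mul_le_mul hfp hdist.le (norm_nonneg _) (by linarith))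
      have hn' : (n : ℝ) + 1 ≤ (m : ℝ) := by exact_mod_cast hn1
      have hQ : 2 * ((n : ℝ) + 1) * ⟪f - p, f - z j⟫ + ‖f - z j‖ ^ 2 ≤ C := by
        have h1 : 2 * ((n : ℝ) + 1) * ⟪f - p, f - f'⟫ ≤ 2 * ((n : ℝ) + 1) * (2 * b * δ) :=
          mul_le_mul_of_nonneg_left hip (by positivity)
        have h2 : 2 * ((n : ℝ) + 1) * (2 * b * δ) + (b ^ 2 - ‖f‖ ^ 2 + 2 * (b * δ)) ≤ C := by
          rw [hCdef]; nlinarith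
        calc 2 * ((n : ℝ) + 1) * ⟪f - p, f - z j⟫ + ‖f - z j‖ ^ 2
            ≤ 2 * ((n : ℝ) + 1) * ⟪f - p, f - f'⟫ + ∑ i ∈ t, wt i * ‖f - z i‖ ^ 2 := hjle
          _ ≤ 2 * ((n : ℝ) + 1) * (2 * b * δ) + (b ^ 2 - ‖f‖ ^ 2 + 2 * (b * δ)) := by
              linarith [hA]
          _ ≤ C := h2
      set N : ℝ := (n : ℝ) + 1 with hN
      have hNpos : 0 < N := by positivity
      have hN1pos : 0 < N + 1 := by positivity
      set a : ℝ := N / (N + 1) with ha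
      set cc : ℝ := 1 / (N + 1) with hcc
      have ha0 : 0 ≤ a := by positivity
      have hcc0 : 0 ≤ cc := by positivity
      have hac : a + cc = 1 := by rw [ha, hcc]; field_simp
      refine ⟨Fin.snoc g (z j), Fin.snoc (fun i => a * w i) cc, ?_, ?_, ?_, ?_⟩
      · intro i
        rcases Fin.eq_castSucc_or_eq_last i with ⟨i', rfl⟩ | rfl
        · rw [Fin.snoc_castSucc]; exact hgG i'
        · rw [Fin.snoc_last]; exact hzG j hj
      · intro i
        rcases Fin.eq_castSucc_or_eq_last i with ⟨i', rfl⟩ | rfl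
        · rw [Fin.snoc_castSucc]; exact mul_nonneg ha0 (hw0 i')
        · rw [Fin.snoc_last]; exact hcc0
      · rw [Fin.sum_univ_castSucc]
        simp only [Fin.snoc_castSucc, Fin.snoc_last]
        rw [← Finset.mul_sum, hw1, mul_one, hac]
      · have hq : (∑ i, (Fin.snoc (fun i => a * w i) cc : Fin (n + 2) → ℝ) i •
            (Fin.snoc g (z j) : Fin (n + 2) → H) i) = a • p + cc • z j := by
          rw [Fin.sum_univ_castSucc]
          simp only [Fin.snoc_castSucc, Fin.snoc_last]
          congr 1
          rw [hp, Finset.smul_sum]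
          exact Finset.sum_congr rfl fun i _ => (smul_smul a (w i) (g i)).symm
        rw [hq]
        have hfq : f - (a • p + cc • z j) = a • (f - p) + cc • (f - z j) := by
          have h1 : a • (f - p) + cc • (f - z j)
              = (a + cc) • f - (a • p + cc • z j) := by
            rw [smul_sub, smul_sub, add_smul]; abel
          rw [h1, hac, one_smul]
        rw [hfq, norm_add_sq_real, real_inner_smul_left, real_inner_smul_right,
          norm_smul, norm_smul, Real.norm_of_nonneg ha0, Real.norm_of_nonneg hcc0]
        have e2' : N * ‖f - p‖ ^ 2 ≤ C := by
          have : ‖f - p‖ ^ 2 ≤ C / N := hbound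
          calc N * ‖f - p‖ ^ 2 ≤ N * (C / N) := mul_le_mul_of_nonneg_left this hNpos.le
            _ = C := by field_simp
        have hnum : N ^ 2 * ‖f - p‖ ^ 2 + (2 * N * ⟪f - p, f - z j⟫ + ‖f - z j‖ ^ 2)
            ≤ (N + 1) * C := by
          have : N * (N * ‖f - p‖ ^ 2) ≤ N * C := mul_le_mul_of_nonneg_left e2' hNpos.le
          have hQ' : 2 * N * ⟪f - p, f - z j⟫ + ‖f - z j‖ ^ 2 ≤ C := by
            rw [hN]; exact hQ
          nlinarith [hQ', this]
        have hEq : (a * ‖f - p‖) ^ 2 + 2 * (a * (cc * ⟪f - p, f - z j⟫))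
            + (cc * ‖f - z j‖) ^ 2
            = (N ^ 2 * ‖f - p‖ ^ 2 + (2 * N * ⟪f - p, f - z j⟫ + ‖f - z j‖ ^ 2))
              / (N + 1) ^ 2 := by
          rw [ha, hcc]; field_simp; ring
        rw [hEq]
        have hcast : ((n + 1 : ℕ) : ℝ) + 1 = N + 1 := by push_cast [hN]; ring
        rw [hcast, div_le_div_iff₀ (by positivity) hN1pos]
        nlinarith [hnum, hN1pos]
  obtain ⟨g, w, hgG, hw0, hw1, hbound⟩ := key m le_rfl
  refine ⟨g, w, hgG, hw0, hw1, ?_⟩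
  have hcast : ((m + 1 : ℕ) : ℝ) = (m : ℝ) + 1 := by push_cast; ring
  rw [hcast]
  calc ‖f - ∑ i, w i • g i‖ ^ 2 ≤ C / ((m : ℝ) + 1) := hbound
    _ ≤ c' / ((m : ℝ) + 1) := by
        apply div_le_div_of_nonneg_right hCc' <;> positivity
end
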